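/- Let L ∈ ℝ^{n×q} with im L ⊆ V*, where V* is the largest (A,B,C,D)-output nulling subspace. Then the largest (A,[B L],C,[D 0])-output nulling subspace equals V*; moreover, every (A,[B L],C,[D 0])-self bounded subspace V satisfies im L ⊆ V. -/

import Mathlib

/-! Every `(A,B,C,D)`-output nulling subspace is `(A,[B L],C,[D 0])`-output nulling (take
`w = 0`); conversely, if `V` contains `im L`, the disturbance `L w` can be subtracted
without leaving `V`. So the two families agree on subspaces containing `im L`, which forces
`Ṽ* = V*`. Finally `L w = B 0 + L w` lies in `Ṽ* ∩ [B L](ker [D 0])`, hence in every self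
bounded subspace. -/

open Matrix

section OutputNulling

variable {R ι μ κ π : Type*} [CommRing R] [Fintype ι] [Fintype μ] [Fintype κ]

def IsOutputNulling (A : Matrix ι ι R) (B : Matrix ι μ R) (C : Matrix π ι R)
    (D : Matrix π μ R) (V : Submodule R (ι → R)) : Prop :=
  ∀ x ∈ V, ∃ u : μ → R, A *ᵥ x + B *ᵥ u ∈ V ∧ C *ᵥ x + D *ᵥ u = 0

/-- Output nulling for the quadruple `(A, [B L], C, [D 0])`. -/
def IsOutputNullingExt (A : Matrix ι ι R) (B : Matrix ι μ R) (L : Matrix ι κ R)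
    (C : Matrix π ι R) (D : Matrix π μ R) (V : Submodule R (ι → R)) : Prop :=
  ∀ x ∈ V, ∃ u : μ → R, ∃ w : κ → R,
    A *ᵥ x + B *ᵥ u + L *ᵥ w ∈ V ∧ C *ᵥ x + D *ᵥ u = 0

variable {A : Matrix ι ι R} {B : Matrix ι μ R} {C : Matrix π ι R} {D : Matrix π μ R}
  {V : Submodule R (ι → R)}

theorem IsOutputNulling.isOutputNullingExt (hV : IsOutputNulling A B C D V)
    (L : Matrix ι κ R) : IsOutputNullingExt A B L C D V := by
  intro x hx
  obtain ⟨u, hu, hCu⟩ := hV x hx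
  exact ⟨u, 0, by simpa using hu, hCu⟩

theorem isOutputNullingExt_iff_of_range_le {L : Matrix ι κ R}
    (hL : ∀ w : κ → R, L *ᵥ w ∈ V) :
    IsOutputNullingExt A B L C D V ↔ IsOutputNulling A B C D V := by
  refine ⟨fun hV x hx => ?_, fun hV => hV.isOutputNullingExt L⟩
  obtain ⟨u, w, huw, hCu⟩ := hV x hx
  refine ⟨u, ?_, hCu⟩
  simpa using V.sub_mem huw (hL w)

end OutputNulling

/-- If `im L ⊆ V*`, then the largest `(A,[B L],C,[D 0])`-output nulling subspace
equals `V*`, and every `(A,[B L],C,[D 0])`-self bounded subspace contains `im L`. -/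
theorem stmt19 {n m p q : ℕ}
    (A : Matrix (Fin n) (Fin n) ℝ) (B : Matrix (Fin n) (Fin m) ℝ)
    (C : Matrix (Fin p) (Fin n) ℝ) (D : Matrix (Fin p) (Fin m) ℝ)
    (L : Matrix (Fin n) (Fin q) ℝ)
    (Vstar VstarExt : Submodule ℝ (Fin n → ℝ))
    -- `Vstar` is the largest `(A,B,C,D)`-output nulling subspace
    (hVstarON : ∀ x ∈ Vstar, ∃ u : Fin m → ℝ,
      A.mulVec x + B.mulVec u ∈ Vstar ∧ C.mulVec x + D.mulVec u = 0)
    (hVstarMax : ∀ W : Submodule ℝ (Fin n → ℝ),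
      (∀ x ∈ W, ∃ u : Fin m → ℝ,
        A.mulVec x + B.mulVec u ∈ W ∧ C.mulVec x + D.mulVec u = 0) → W ≤ Vstar)
    -- `VstarExt` is the largest `(A,[B L],C,[D 0])`-output nulling subspace
    (hVstarExtON : ∀ x ∈ VstarExt, ∃ u : Fin m → ℝ, ∃ w : Fin q → ℝ,
      A.mulVec x + B.mulVec u + L.mulVec w ∈ VstarExt ∧ C.mulVec x + D.mulVec u = 0)
    (hVstarExtMax : ∀ W : Submodule ℝ (Fin n → ℝ),
      (∀ x ∈ W, ∃ u : Fin m → ℝ, ∃ w : Fin q → ℝ,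
        A.mulVec x + B.mulVec u + L.mulVec w ∈ W ∧ C.mulVec x + D.mulVec u = 0) →
      W ≤ VstarExt)
    -- `im L ⊆ Vstar`
    (hL : ∀ w : Fin q → ℝ, L.mulVec w ∈ Vstar) :
    VstarExt = Vstar ∧
    (∀ V : Submodule ℝ (Fin n → ℝ),
      -- `V` is `(A,[B L],C,[D 0])`-output nulling
      (∀ x ∈ V, ∃ u : Fin m → ℝ, ∃ w : Fin q → ℝ,
        A.mulVec x + B.mulVec u + L.mulVec w ∈ V ∧ C.mulVec x + D.mulVec u = 0) →
      -- `V` is `(A,[B L],C,[D 0])`-self bounded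
      (∀ u : Fin m → ℝ, ∀ w : Fin q → ℝ, D.mulVec u = 0 →
        B.mulVec u + L.mulVec w ∈ VstarExt → B.mulVec u + L.mulVec w ∈ V) →
      ∀ w : Fin q → ℝ, L.mulVec w ∈ V) := by
  have hle : Vstar ≤ VstarExt :=
    hVstarExtMax Vstar (IsOutputNulling.isOutputNullingExt hVstarON L)
  have hL' : ∀ w, L *ᵥ w ∈ VstarExt := fun w => hle (hL w)
  have heq : VstarExt = Vstar :=
    le_antisymm (hVstarMax VstarExt ((isOutputNullingExt_iff_of_range_le hL').1 hVstarExtON)) hle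
  refine ⟨heq, fun V _ hV w => ?_⟩
  simpa using hV 0 w (mulVec_zero D) (by simpa using hL' w)
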